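/- Let V and W be finite-dimensional real inner product spaces and B : V × V → W a bilinear alternating map. Let N = V × W with product (v,w)·(v',w') = (v+v', w+w' + ½B(v,v')). Let s be a linear subspace of W, W' = s^⊥, π : W → W' the orthogonal projection, and N' = V × W' with product (v,w')·(v',w'') = (v+v', w'+w'' + ½π(B(v,v'))). For F ∈ S(V × W) define (R^s F)(v,w') = ∫_s F(v, w' + σ) dσ. For v₀ ∈ V define the left-invariant vector field X_{v₀} on N by (X_{v₀}F)(v,w) = d/dτ|_{τ=0} F((v,w)·(τ v₀, 0)), and define X'_{v₀} on N' analogously. For w₀ ∈ W define (∂_{w₀}F)(v,w) = d/dτ|_{τ=0} F(v, w + τ w₀). Then for every F ∈ S(V × W): (1) R^s(X_{v₀}F) = X'_{v₀}(R^s F) for every v₀ ∈ V; (2) R^s(∂_{w₀}F) = ∂_{w₀}(R^s F) for every w₀ ∈ W'; (3) R^s(∂_{w₀}F) = 0 for every w₀ ∈ s. -/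

import Mathlib

/-!
Put `H x = ∫_s F (x + (0, σ)) dσ` on `V × W`, so that `R^s F (v, w') = H (v, w')`. The decay of `F`
and of `DF` gives a majorant `C (1 + ‖σ‖)^{-(dim s + 1)}`, uniform for `x` in a ball, so `H` can be
differentiated under the integral sign: `DH x d = ∫_s DF (x + (0, σ)) d dσ`. Since `H` is invariant
under translation by `0 × s`, `DH x` vanishes on `0 × s`, which is (3). The fields `X_{v₀}` and
`∂_{w₀}` are derivatives in directions that are constant along each fibre `{v} × (w' + s)`, so `R^s`
turns them into derivatives of `H`. For (1) the directions of `X_{v₀}` and `X'_{v₀}` at `(v, w')`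
are `(v₀, ½ B(v, v₀))` and `(v₀, ½ π B(v, v₀))`, which differ by a vector of `0 × s`.
-/

open MeasureTheory

/-- The product of the two-step nilpotent group `V × W` attached to the bilinear
alternating map `B`. -/
noncomputable def nilMul {V W : Type*} [AddCommGroup V] [Module ℝ V] [AddCommGroup W] [Module ℝ W]
    (B : V →ₗ[ℝ] V →ₗ[ℝ] W) (p q : V × W) : V × W :=
  (p.1 + q.1, p.2 + q.2 + (2⁻¹ : ℝ) • B p.1 q.1)

/-- The left-invariant vector field `X_{v₀}`:
`(X_{v₀}F)(p) = d/dτ|₀ F(p·(τv₀,0))`. -/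
noncomputable def leftVF {V W : Type*}
    [NormedAddCommGroup V] [NormedSpace ℝ V] [NormedAddCommGroup W] [NormedSpace ℝ W]
    (B : V →ₗ[ℝ] V →ₗ[ℝ] W) (v₀ : V) (F : V × W → ℂ) : V × W → ℂ :=
  fun p => deriv (fun τ : ℝ => F (nilMul B p (τ • v₀, 0))) 0

/-- The central derivative `∂_{w₀}`: `(∂_{w₀}F)(p) = d/dτ|₀ F(p.1, p.2 + τw₀)`. -/
noncomputable def centDeriv {V W : Type*}
    [NormedAddCommGroup V] [NormedSpace ℝ V] [NormedAddCommGroup W] [NormedSpace ℝ W]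
    (w₀ : W) (F : V × W → ℂ) : V × W → ℂ :=
  fun p => deriv (fun τ : ℝ => F (p.1, p.2 + τ • w₀)) 0

/-- The transform `R^s F (v,w') = ∫_s F(v, w'+σ) dσ`. -/
noncomputable def radonS {V W : Type*}
    [NormedAddCommGroup V] [NormedSpace ℝ V]
    [NormedAddCommGroup W] [InnerProductSpace ℝ W]
    (s : Submodule ℝ W) [MeasureSpace s]
    (F : V × W → ℂ) : V × ↥sᗮ → ℂ :=
  fun p => ∫ σ : s, F (p.1, (p.2 : W) + (σ : W))

open Module

lemma one_add_norm_le_mul_one_add_norm_add {E : Type*} [SeminormedAddCommGroup E] (a b : E) :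
    1 + ‖b‖ ≤ (1 + ‖a‖) * (1 + ‖a + b‖) := by
  have : ‖b‖ ≤ ‖a + b‖ + ‖a‖ := by simpa using norm_sub_le (a + b) a
  nlinarith [norm_nonneg a, norm_nonneg (a + b)]

lemma SchwartzMap.exists_one_add_norm_pow_mul_le {E G : Type*} [NormedAddCommGroup E]
    [NormedSpace ℝ E] [NormedAddCommGroup G] [NormedSpace ℝ G] (g : SchwartzMap E G) (k : ℕ) :
    ∃ C, ∀ y, (1 + ‖y‖) ^ k * ‖g y‖ ≤ C :=
  ⟨_, fun y => by
    simpa using g.one_add_le_sup_seminorm_apply (𝕜 := ℝ) (m := (k, 0)) le_rfl le_rfl y⟩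

lemma norm_apply_add_le_of_decay {E G : Type*} [SeminormedAddCommGroup E]
    [SeminormedAddCommGroup G] {g : E → G} {k : ℕ} {C : ℝ}
    (hg : ∀ y, (1 + ‖y‖) ^ k * ‖g y‖ ≤ C) {x : E} {R : ℝ} (hx : ‖x‖ ≤ R) (z : E) :
    ‖g (x + z)‖ ≤ C * (1 + R) ^ k * ((1 + ‖z‖) ^ k)⁻¹ := by
  have hC : 0 ≤ C := (by positivity : 0 ≤ (1 + ‖(0 : E)‖) ^ k * ‖g 0‖).trans (hg 0)
  rw [← div_eq_mul_inv, le_div_iff₀ (by positivity)]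
  calc ‖g (x + z)‖ * (1 + ‖z‖) ^ k
      ≤ ‖g (x + z)‖ * ((1 + ‖x‖) * (1 + ‖x + z‖)) ^ k := by
        gcongr
        exact one_add_norm_le_mul_one_add_norm_add x z
    _ = (1 + ‖x‖) ^ k * ((1 + ‖x + z‖) ^ k * ‖g (x + z)‖) := by
        rw [mul_pow]; ring
    _ ≤ (1 + R) ^ k * C := by
        gcongr
        · exact pow_nonneg (by linarith [norm_nonneg x]) k
        · exact hg _
    _ = C * (1 + R) ^ k := mul_comm _ _

lemma lineDeriv_eq_zero_of_forall_add_smul_eq {E G : Type*} [AddCommGroup E] [Module ℝ E]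
    [NormedAddCommGroup G] [NormedSpace ℝ G] {H : E → G} {x v : E}
    (h : ∀ t : ℝ, H (x + t • v) = H x) : lineDeriv ℝ H x v = 0 := by
  simp [lineDeriv, h]

lemma integrable_one_add_norm_pow_inv {S : Type*} [NormedAddCommGroup S] [NormedSpace ℝ S]
    [FiniteDimensional ℝ S] [MeasurableSpace S] [BorelSpace S] (μ : Measure S)
    [μ.IsAddHaarMeasure] :
    Integrable (fun σ : S => ((1 + ‖σ‖) ^ (finrank ℝ S + 1))⁻¹) μ := by
  convert integrable_one_add_norm (μ := μ) (r := (finrank ℝ S + 1 : ℕ)) (by simp)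
    using 2 with σ
  rw [Real.rpow_neg (by positivity), Real.rpow_natCast]

section IntegralAlong

variable {E G S : Type*} [NormedAddCommGroup E] [NormedSpace ℝ E]
  [NormedAddCommGroup G] [NormedSpace ℝ G] [NormedAddCommGroup S] [NormedSpace ℝ S]
  [MeasurableSpace S] (μ : Measure S) (L : S →ₗᵢ[ℝ] E)

noncomputable def integralAlong (f : E → G) (x : E) : G :=
  ∫ σ, f (x + L σ) ∂μ

lemma integralAlong_add_map [MeasurableAdd S] [μ.IsAddLeftInvariant] (f : E → G) (x : E)
    (σ₀ : S) : integralAlong μ L f (x + L σ₀) = integralAlong μ L f x := by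
  simp only [integralAlong, add_assoc, ← map_add]
  exact integral_add_left_eq_self (fun σ => f (x + L σ)) σ₀

variable [FiniteDimensional ℝ S] [BorelSpace S] [μ.IsAddHaarMeasure]

lemma SchwartzMap.integrable_comp_add_map (g : SchwartzMap E G) (x : E) :
    Integrable (fun σ => g (x + L σ)) μ := by
  obtain ⟨C, hC⟩ := g.exists_one_add_norm_pow_mul_le (finrank ℝ S + 1)
  refine ((integrable_one_add_norm_pow_inv μ).const_mul
    (C * (1 + ‖x‖) ^ (finrank ℝ S + 1))).mono'
    (g.continuous.comp (continuous_const.add L.continuous)).aestronglyMeasurable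
    (.of_forall fun σ => ?_)
  simpa only [L.norm_map] using norm_apply_add_le_of_decay hC le_rfl (L σ)

theorem SchwartzMap.hasFDerivAt_integralAlong (F : SchwartzMap E G) (x₀ : E) :
    HasFDerivAt (integralAlong μ L F) (∫ σ, fderiv ℝ F (x₀ + L σ) ∂μ) x₀ := by
  obtain ⟨C, hC⟩ := (SchwartzMap.fderivCLM ℝ E G F).exists_one_add_norm_pow_mul_le
    (finrank ℝ S + 1)
  refine hasFDerivAt_integral_of_dominated_of_fderiv_le (F' := fun x σ => fderiv ℝ F (x + L σ))
    (Metric.ball_mem_nhds x₀ one_pos)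
    (.of_forall fun x => (F.integrable_comp_add_map μ L x).aestronglyMeasurable)
    (F.integrable_comp_add_map μ L x₀)
    ((SchwartzMap.fderivCLM ℝ E G F).integrable_comp_add_map μ L x₀).aestronglyMeasurable
    (.of_forall fun σ x hx => ?_)
    ((integrable_one_add_norm_pow_inv μ).const_mul
      (C * (1 + (‖x₀‖ + 1)) ^ (finrank ℝ S + 1)))
    (.of_forall fun σ x _ => ?_)
  · have hx : ‖x‖ ≤ ‖x₀‖ + 1 := by
      have := norm_le_norm_add_norm_sub' x x₀
      linarith [mem_ball_iff_norm.mp hx]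
    simpa only [L.norm_map, SchwartzMap.fderivCLM_apply] using
      norm_apply_add_le_of_decay hC hx (L σ)
  · exact (hasFDerivAt_comp_add_right (L σ)).2 F.differentiableAt.hasFDerivAt

lemma SchwartzMap.differentiable_integralAlong (F : SchwartzMap E G) :
    Differentiable ℝ (integralAlong μ L F) :=
  fun x => (F.hasFDerivAt_integralAlong μ L x).differentiableAt

lemma SchwartzMap.fderiv_integralAlong_apply (F : SchwartzMap E G) (x v : E) :
    fderiv ℝ (integralAlong μ L F) x v = integralAlong μ L (fun y => fderiv ℝ F y v) x := by
  rw [(F.hasFDerivAt_integralAlong μ L x).fderiv, integralAlong,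
    ContinuousLinearMap.integral_apply]
  exact (SchwartzMap.fderivCLM ℝ E G F).integrable_comp_add_map μ L x

lemma SchwartzMap.fderiv_integralAlong_apply_map (F : SchwartzMap E G) (x : E) (σ : S) :
    fderiv ℝ (integralAlong μ L F) x (L σ) = 0 := by
  rw [← (F.differentiable_integralAlong μ L x).lineDeriv_eq_fderiv]
  refine lineDeriv_eq_zero_of_forall_add_smul_eq fun t => ?_
  rw [← L.map_smul, integralAlong_add_map]

end IntegralAlong

section LeftInvariant

variable {V W : Type*} [NormedAddCommGroup V] [NormedSpace ℝ V]
  [NormedAddCommGroup W] [NormedSpace ℝ W]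

lemma nilMul_smul_fst (B : V →ₗ[ℝ] V →ₗ[ℝ] W) (p : V × W) (v₀ : V) (t : ℝ) :
    nilMul B p (t • v₀, 0) = p + t • (v₀, (2⁻¹ : ℝ) • B p.1 v₀) := by
  ext <;> simp [nilMul, smul_comm t]

lemma leftVF_eq_lineDeriv (B : V →ₗ[ℝ] V →ₗ[ℝ] W) (v₀ : V) (F : V × W → ℂ) :
    leftVF B v₀ F = fun p => lineDeriv ℝ F p (v₀, (2⁻¹ : ℝ) • B p.1 v₀) := by
  funext p
  simp only [leftVF, lineDeriv, nilMul_smul_fst]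

lemma centDeriv_eq_lineDeriv (w₀ : W) (F : V × W → ℂ) :
    centDeriv w₀ F = fun p => lineDeriv ℝ F p (0, w₀) := by
  have (p : V × W) (t : ℝ) : ((p.1, p.2 + t • w₀) : V × W) = p + t • (0, w₀) := by
    ext <;> simp
  funext p
  simp only [centDeriv, lineDeriv, this]

end LeftInvariant

section Radon

variable {V W : Type*} [NormedAddCommGroup V] [NormedSpace ℝ V]
  [NormedAddCommGroup W] [InnerProductSpace ℝ W] (s : Submodule ℝ W)

noncomputable def radonFiber : s →ₗᵢ[ℝ] V × W :=
  (LinearIsometry.inr ℝ V W).comp s.subtypeₗᵢ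

lemma radonS_eq_integralAlong [MeasureSpace s] (G : V × W → ℂ) (q : V × sᗮ) :
    radonS s G q = integralAlong volume (radonFiber s) G (q.1, (q.2 : W)) := by
  simp [radonS, integralAlong, radonFiber]

variable [FiniteDimensional ℝ s] [MeasureSpace s] [BorelSpace s]
  [(volume : Measure s).IsAddHaarMeasure]

lemma radonS_lineDeriv (F : SchwartzMap (V × W) ℂ) (d : V → V × W) (q : V × sᗮ) :
    radonS s (fun p => lineDeriv ℝ F p (d p.1)) q =
      fderiv ℝ (integralAlong volume (radonFiber s) F) (q.1, (q.2 : W)) (d q.1) := by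
  rw [F.fderiv_integralAlong_apply volume, ← radonS_eq_integralAlong]
  simp only [radonS, F.differentiableAt.lineDeriv_eq_fderiv]

lemma lineDeriv_radonS (F : SchwartzMap (V × W) ℂ) (q d : V × sᗮ) :
    lineDeriv ℝ (radonS s F) q d =
      fderiv ℝ (integralAlong volume (radonFiber s) F) (q.1, (q.2 : W)) (d.1, (d.2 : W)) := by
  let J : V × sᗮ →L[ℝ] V × W := (ContinuousLinearMap.id ℝ V).prodMap sᗮ.subtypeL
  have hJ : radonS s F = integralAlong volume (radonFiber s) F ∘ J :=
    funext (radonS_eq_integralAlong s F)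
  rw [hJ]
  exact (((F.differentiable_integralAlong volume _ (J q)).hasFDerivAt.comp q
    J.hasFDerivAt).hasLineDerivAt d).lineDeriv

end Radon

theorem stmt9_general
    {V W : Type*}
    [NormedAddCommGroup V] [InnerProductSpace ℝ V]
    [NormedAddCommGroup W] [InnerProductSpace ℝ W] [FiniteDimensional ℝ W]
    (B : V →ₗ[ℝ] V →ₗ[ℝ] W)
    (s : Submodule ℝ W) [MeasurableSpace s] [BorelSpace s]
    (F : SchwartzMap (V × W) ℂ) :
    -- (1) R^s intertwines the left-invariant vector fields X_{v₀} and X'_{v₀}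
    (∀ v₀ : V, ∀ p : V × ↥sᗮ,
      radonS s (leftVF B v₀ (⇑F)) p =
        leftVF (B.compr₂ ((Submodule.orthogonalProjectionOnto sᗮ : W →L[ℝ] ↥sᗮ) : W →ₗ[ℝ] ↥sᗮ)) v₀
          (radonS s (⇑F)) p) ∧
    -- (2) R^s intertwines ∂_{w₀} for w₀ ∈ W'
    (∀ w₀ : ↥sᗮ, ∀ p : V × ↥sᗮ,
      radonS s (centDeriv ((w₀ : W)) (⇑F)) p = centDeriv w₀ (radonS s (⇑F)) p) ∧
    -- (3) R^s kills ∂_{w₀} for w₀ ∈ s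
    (∀ w₀ ∈ s, ∀ p : V × ↥sᗮ, radonS s (centDeriv w₀ (⇑F)) p = 0) := by
  set H : V × W → ℂ := integralAlong (volume : Measure s) (radonFiber s) F
  refine ⟨fun v₀ q => ?_, fun w₀ q => ?_, fun w₀ hw₀ q => ?_⟩
  · have hsplit : ((v₀, (2⁻¹ : ℝ) • B q.1 v₀) : V × W) =
        (v₀, (((2⁻¹ : ℝ) • sᗮ.orthogonalProjectionOnto (B q.1 v₀) : sᗮ) : W)) +
          radonFiber (V := V) s ((2⁻¹ : ℝ) • s.orthogonalProjectionOnto (B q.1 v₀)) := by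
      ext <;> simp [radonFiber, Submodule.orthogonalProjectionOnto_orthogonal, smul_sub]
    calc radonS s (leftVF B v₀ F) q
        = fderiv ℝ H (q.1, q.2) (v₀, (2⁻¹ : ℝ) • B q.1 v₀) := by
          rw [leftVF_eq_lineDeriv]
          exact radonS_lineDeriv s F (fun v => (v₀, (2⁻¹ : ℝ) • B v v₀)) q
      _ = fderiv ℝ H (q.1, q.2)
            (v₀, (((2⁻¹ : ℝ) • sᗮ.orthogonalProjectionOnto (B q.1 v₀) : sᗮ) : W)) := by
          rw [hsplit, map_add, F.fderiv_integralAlong_apply_map volume, add_zero]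
      _ = _ := by
          simp [leftVF_eq_lineDeriv, lineDeriv_radonS, H]
  · simp only [centDeriv_eq_lineDeriv, lineDeriv_radonS]
    exact radonS_lineDeriv s F (fun _ => (0, w₀)) q
  · rw [centDeriv_eq_lineDeriv, radonS_lineDeriv s F (fun _ => (0, w₀)) q]
    exact F.fderiv_integralAlong_apply_map volume (radonFiber s) _ ⟨w₀, hw₀⟩

theorem stmt9
    {V W : Type*}
    [NormedAddCommGroup V] [InnerProductSpace ℝ V] [FiniteDimensional ℝ V]
    [MeasurableSpace V] [BorelSpace V]
    [NormedAddCommGroup W] [InnerProductSpace ℝ W] [FiniteDimensional ℝ W]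
    [MeasurableSpace W] [BorelSpace W]
    (B : V →ₗ[ℝ] V →ₗ[ℝ] W) (hB : ∀ v : V, B v v = 0)
    (s : Submodule ℝ W) [MeasurableSpace s] [BorelSpace s]
    (F : SchwartzMap (V × W) ℂ) :
    -- (1) R^s intertwines the left-invariant vector fields X_{v₀} and X'_{v₀}
    (∀ v₀ : V, ∀ p : V × ↥sᗮ,
      radonS s (leftVF B v₀ (⇑F)) p =
        leftVF (B.compr₂ ((Submodule.orthogonalProjectionOnto sᗮ : W →L[ℝ] ↥sᗮ) : W →ₗ[ℝ] ↥sᗮ)) v₀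
          (radonS s (⇑F)) p) ∧
    -- (2) R^s intertwines ∂_{w₀} for w₀ ∈ W'
    (∀ w₀ : ↥sᗮ, ∀ p : V × ↥sᗮ,
      radonS s (centDeriv ((w₀ : W)) (⇑F)) p = centDeriv w₀ (radonS s (⇑F)) p) ∧
    -- (3) R^s kills ∂_{w₀} for w₀ ∈ s
    (∀ w₀ ∈ s, ∀ p : V × ↥sᗮ, radonS s (centDeriv w₀ (⇑F)) p = 0) :=
  stmt9_general B s F
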